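/- arXiv:2506.09624 — 2 statements merged into one kernel-verified Lean document; each statement's English description precedes it below -/
import Mathlib

section
/- (Core identity behind Proposition 3.) Let m be a sub-σ-algebra of 𝓕 (generated by the covariates X and the bivariate frailty γ), and suppose the pair (T1₀, T2₀) is conditionally independent of the pair (T1₁, T2₁) given m. Then μ(ios) = E[ μ⟦ios₀ | m⟧ · μ⟦ios₁ | m⟧ ], and if μ(ios) > 0, then for every t ∈ [0,1], FICE(t) = E[ μ⟦{T1₁ ≤ t} | m⟧ · μ⟦ios₀ | m⟧ − μ⟦{T1₀ ≤ t} | m⟧ · μ⟦ios₁ | m⟧ ] / E[ μ⟦ios₀ | m⟧ · μ⟦ios₁ | m⟧ ], where μ⟦E | m⟧ denotes the conditional probability (conditional expectation of the indicator of E) given m. -/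
open MeasureTheory Set ProbabilityTheory
open scoped ProbabilityTheory

/-- `ios = {T1 ≤ 1} ∪ {T2 > 1}`, the infected-or-survivor event. -/
def iosEv {Ω : Type*} (T1 T2 : Ω → ℝ) : Set Ω :=
  {ω | T1 ω ≤ 1} ∪ {ω | (1:ℝ) < T2 ω}

/-- Elementary conditional probability `μ(E|F) = μ(E ∩ F)/μ(F)`. -/
noncomputable def condProbR {Ω : Type*} {mΩ : MeasurableSpace Ω} (μ : Measure Ω)
    (E F : Set Ω) : ℝ :=
  (μ (E ∩ F)).toReal / (μ F).toReal

lemma key_eq {Ω : Type*} {mΩ : MeasurableSpace Ω} (μ : Measure Ω) [IsProbabilityMeasure μ]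
    (m : MeasurableSpace Ω) (hm : m ≤ mΩ)
    (A B : Set Ω) (hAB : MeasurableSet[mΩ] (A ∩ B))
    (h : (μ⟦A ∩ B | m⟧) =ᵐ[μ] fun ω => (μ⟦A | m⟧) ω * (μ⟦B | m⟧) ω) :
    (μ (A ∩ B)).toReal = ∫ ω, (μ⟦A | m⟧) ω * (μ⟦B | m⟧) ω ∂μ := by
  rw [← integral_congr_ae h, integral_condExp hm]
  exact (@integral_indicator_one Ω mΩ μ (A ∩ B) hAB).symm

/-- Core identity behind Proposition 3: if `(T1₀,T2₀)` is conditionally independent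
of `(T1₁,T2₁)` given the sub-σ-algebra `m`, then
`μ(ios) = E[μ⟦ios₀|m⟧ · μ⟦ios₁|m⟧]`, and whenever `μ(ios) > 0`, for every `t ∈ [0,1]`,
`FICE(t) = E[μ⟦{T1₁ ≤ t}|m⟧ μ⟦ios₀|m⟧ − μ⟦{T1₀ ≤ t}|m⟧ μ⟦ios₁|m⟧] / E[μ⟦ios₀|m⟧ μ⟦ios₁|m⟧]`. -/
theorem FICE_identification_frailty
    {Ω : Type*} (m : MeasurableSpace Ω) {mΩ : MeasurableSpace Ω} [StandardBorelSpace Ω] [Nonempty Ω]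
    (μ : Measure Ω) [IsProbabilityMeasure μ]
    (hm : m ≤ mΩ)
    (T1₀ T2₀ T1₁ T2₁ : Ω → ℝ)
    (hT1₀ : Measurable T1₀) (hT2₀ : Measurable T2₀)
    (hT1₁ : Measurable T1₁) (hT2₁ : Measurable T2₁)
    (hCI : CondIndepFun m hm (fun ω => (T1₀ ω, T2₀ ω)) (fun ω => (T1₁ ω, T2₁ ω)) μ) :
    ((μ (iosEv T1₀ T2₀ ∩ iosEv T1₁ T2₁)).toReal
        = ∫ ω, (μ⟦iosEv T1₀ T2₀ | m⟧) ω * (μ⟦iosEv T1₁ T2₁ | m⟧) ω ∂μ) ∧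
    (0 < μ (iosEv T1₀ T2₀ ∩ iosEv T1₁ T2₁) →
      ∀ t : ℝ, 0 ≤ t → t ≤ 1 →
        condProbR μ {ω | T1₁ ω ≤ t} (iosEv T1₀ T2₀ ∩ iosEv T1₁ T2₁)
            - condProbR μ {ω | T1₀ ω ≤ t} (iosEv T1₀ T2₀ ∩ iosEv T1₁ T2₁)
          = (∫ ω, (μ⟦{ω' | T1₁ ω' ≤ t} | m⟧) ω * (μ⟦iosEv T1₀ T2₀ | m⟧) ω
                - (μ⟦{ω' | T1₀ ω' ≤ t} | m⟧) ω * (μ⟦iosEv T1₁ T2₁ | m⟧) ω ∂μ)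
            / ∫ ω, (μ⟦iosEv T1₀ T2₀ | m⟧) ω * (μ⟦iosEv T1₁ T2₁ | m⟧) ω ∂μ) := by
  have hpair₀ : Measurable (fun ω => (T1₀ ω, T2₀ ω)) := hT1₀.prodMk hT2₀
  have hpair₁ : Measurable (fun ω => (T1₁ ω, T2₁ ω)) := hT1₁.prodMk hT2₁
  have hCI' := (condIndepFun_iff_condExp_inter_preimage_eq_mul (m' := m) (hm' := hm) (μ := μ) hpair₀ hpair₁).mp hCI
  -- the ios set in ℝ × ℝ
  set S : Set (ℝ × ℝ) := {p | p.1 ≤ 1} ∪ {p | (1:ℝ) < p.2} with hS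
  have hSmeas : MeasurableSet S :=
    (measurableSet_le measurable_fst measurable_const).union
      (measurableSet_lt measurable_const measurable_snd)
  have hs₀ : iosEv T1₀ T2₀ = (fun ω => (T1₀ ω, T2₀ ω)) ⁻¹' S := rfl
  have hs₁ : iosEv T1₁ T2₁ = (fun ω => (T1₁ ω, T2₁ ω)) ⁻¹' S := rfl
  have hLt : ∀ t : ℝ, MeasurableSet {p : ℝ × ℝ | p.1 ≤ t} := fun t =>
    measurableSet_le measurable_fst measurable_const
  have hios₀ : MeasurableSet (iosEv T1₀ T2₀) := hs₀ ▸ hpair₀ hSmeas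
  have hios₁ : MeasurableSet (iosEv T1₁ T2₁) := hs₁ ▸ hpair₁ hSmeas
  have hmain : (μ (iosEv T1₀ T2₀ ∩ iosEv T1₁ T2₁)).toReal
      = ∫ ω, (μ⟦iosEv T1₀ T2₀ | m⟧) ω * (μ⟦iosEv T1₁ T2₁ | m⟧) ω ∂μ := by
    refine key_eq μ m hm _ _ (hios₀.inter hios₁) ?_
    rw [hs₀, hs₁]
    exact hCI' S S hSmeas hSmeas
  refine ⟨hmain, fun hpos t ht0 ht1 => ?_⟩
  -- the numerator sets
  have hA₁ : MeasurableSet {ω | T1₁ ω ≤ t} := measurableSet_le hT1₁ measurable_const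
  have hA₀ : MeasurableSet {ω | T1₀ ω ≤ t} := measurableSet_le hT1₀ measurable_const
  have hsub₁ : {ω | T1₁ ω ≤ t} ∩ (iosEv T1₀ T2₀ ∩ iosEv T1₁ T2₁)
      = iosEv T1₀ T2₀ ∩ {ω | T1₁ ω ≤ t} := by
    ext ω
    simp only [Set.mem_inter_iff, Set.mem_setOf_eq, iosEv, Set.mem_union]
    constructor
    · rintro ⟨h1, h2, _⟩; exact ⟨h2, h1⟩
    · rintro ⟨h2, h1⟩; exact ⟨h1, h2, Or.inl (h1.trans ht1)⟩
  have hsub₀ : {ω | T1₀ ω ≤ t} ∩ (iosEv T1₀ T2₀ ∩ iosEv T1₁ T2₁)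
      = {ω | T1₀ ω ≤ t} ∩ iosEv T1₁ T2₁ := by
    ext ω
    simp only [Set.mem_inter_iff, Set.mem_setOf_eq, iosEv, Set.mem_union]
    constructor
    · rintro ⟨h1, _, h2⟩; exact ⟨h1, h2⟩
    · rintro ⟨h1, h2⟩; exact ⟨h1, Or.inl (h1.trans ht1), h2⟩
  have hpre₁ : {ω | T1₁ ω ≤ t} = (fun ω => (T1₁ ω, T2₁ ω)) ⁻¹' {p : ℝ × ℝ | p.1 ≤ t} := rfl
  have hpre₀ : {ω | T1₀ ω ≤ t} = (fun ω => (T1₀ ω, T2₀ ω)) ⁻¹' {p : ℝ × ℝ | p.1 ≤ t} := rfl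
  have hae₁ : (μ⟦iosEv T1₀ T2₀ ∩ {ω | T1₁ ω ≤ t} | m⟧)
      =ᵐ[μ] fun ω => (μ⟦iosEv T1₀ T2₀ | m⟧) ω * (μ⟦{ω' | T1₁ ω' ≤ t} | m⟧) ω := by
    rw [hs₀, hpre₁]
    exact hCI' S {p : ℝ × ℝ | p.1 ≤ t} hSmeas (hLt t)
  have hae₀ : (μ⟦{ω | T1₀ ω ≤ t} ∩ iosEv T1₁ T2₁ | m⟧)
      =ᵐ[μ] fun ω => (μ⟦{ω' | T1₀ ω' ≤ t} | m⟧) ω * (μ⟦iosEv T1₁ T2₁ | m⟧) ω := by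
    rw [hs₁, hpre₀]
    exact hCI' {p : ℝ × ℝ | p.1 ≤ t} S (hLt t) hSmeas
  have hN₁ : (μ ({ω | T1₁ ω ≤ t} ∩ (iosEv T1₀ T2₀ ∩ iosEv T1₁ T2₁))).toReal
      = ∫ ω, (μ⟦{ω' | T1₁ ω' ≤ t} | m⟧) ω * (μ⟦iosEv T1₀ T2₀ | m⟧) ω ∂μ := by
    rw [hsub₁, key_eq μ m hm _ _ (hios₀.inter hA₁) hae₁]
    exact integral_congr_ae (Filter.Eventually.of_forall fun ω => mul_comm _ _)
  have hN₀ : (μ ({ω | T1₀ ω ≤ t} ∩ (iosEv T1₀ T2₀ ∩ iosEv T1₁ T2₁))).toReal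
      = ∫ ω, (μ⟦{ω' | T1₀ ω' ≤ t} | m⟧) ω * (μ⟦iosEv T1₁ T2₁ | m⟧) ω ∂μ := by
    rw [hsub₀]
    exact key_eq μ m hm _ _ (hA₀.inter hios₁) hae₀
  have hint₁ : Integrable
      (fun ω => (μ⟦{ω' | T1₁ ω' ≤ t} | m⟧) ω * (μ⟦iosEv T1₀ T2₀ | m⟧) ω) μ :=
    integrable_condExp.congr
      (hae₁.trans (Filter.Eventually.of_forall fun ω => mul_comm _ _))
  have hint₀ : Integrable
      (fun ω => (μ⟦{ω' | T1₀ ω' ≤ t} | m⟧) ω * (μ⟦iosEv T1₁ T2₁ | m⟧) ω) μ :=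
    integrable_condExp.congr hae₀
  rw [condProbR, condProbR, hN₁, hN₀, hmain, div_sub_div_same,
    ← integral_sub hint₁ hint₀]
end

section
/- (Core identity behind Proposition A4.) Let m be a sub-σ-algebra of 𝓕, and suppose the pair (T1₀, T2₀) is conditionally independent of the pair (T1₁, T2₁) given m. If μ(ios) > 0 and E[ μ⟦{T1₀ ≤ t} | m⟧ · μ⟦ios₁ | m⟧ ] > 0, then for every t ∈ [0,1] the risk-ratio scale FICE satisfies μ({T1₁ ≤ t} | ios) / μ({T1₀ ≤ t} | ios) = E[ μ⟦{T1₁ ≤ t} | m⟧ · μ⟦ios₀ | m⟧ ] / E[ μ⟦{T1₀ ≤ t} | m⟧ · μ⟦ios₁ | m⟧ ], where μ⟦E | m⟧ denotes the conditional probability (conditional expectation of the indicator of E) given m. -/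
open MeasureTheory Set ProbabilityTheory
open scoped ProbabilityTheory

/-- If the conditional expectation of the indicator of `S ∩ T` factors as a product,
then `μ(S ∩ T)` equals the integral of the product. -/
lemma measure_inter_eq_integral_mul
    {Ω : Type*} (m : MeasurableSpace Ω) {mΩ : MeasurableSpace Ω}
    (μ : Measure Ω) [IsProbabilityMeasure μ] (hm : m ≤ mΩ)
    {S T : Set Ω} (hS : MeasurableSet[mΩ] S) (hT : MeasurableSet[mΩ] T)
    (h : (μ⟦S ∩ T | m⟧) =ᵐ[μ] fun ω => (μ⟦S | m⟧) ω * (μ⟦T | m⟧) ω) :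
    (μ (S ∩ T)).toReal = ∫ ω, (μ⟦S | m⟧) ω * (μ⟦T | m⟧) ω ∂μ := by
  calc (μ (S ∩ T)).toReal = ∫ ω, (S ∩ T).indicator (1 : Ω → ℝ) ω ∂μ :=
        (integral_indicator_one (hS.inter hT)).symm
    _ = ∫ ω, (μ⟦S ∩ T | m⟧) ω ∂μ := (integral_condExp hm).symm
    _ = ∫ ω, (μ⟦S | m⟧) ω * (μ⟦T | m⟧) ω ∂μ := integral_congr_ae h

/-- Core identity behind Proposition A4: if `(T1₀,T2₀)` is conditionally independent of
`(T1₁,T2₁)` given `m`, `μ(ios) > 0`, and `E[μ⟦{T1₀ ≤ t}|m⟧ · μ⟦ios₁|m⟧] > 0`, then for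
every `t ∈ [0,1]` the risk-ratio scale FICE satisfies
`μ({T1₁ ≤ t}|ios)/μ({T1₀ ≤ t}|ios)
  = E[μ⟦{T1₁ ≤ t}|m⟧ μ⟦ios₀|m⟧] / E[μ⟦{T1₀ ≤ t}|m⟧ μ⟦ios₁|m⟧]`. -/
theorem FICE_risk_ratio_identification_frailty
    {Ω : Type*} (m : MeasurableSpace Ω) {mΩ : MeasurableSpace Ω} [StandardBorelSpace Ω] [Nonempty Ω]
    (μ : Measure Ω) [IsProbabilityMeasure μ]
    (hm : m ≤ mΩ)
    (T1₀ T2₀ T1₁ T2₁ : Ω → ℝ)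
    (hT1₀ : Measurable T1₀) (hT2₀ : Measurable T2₀)
    (hT1₁ : Measurable T1₁) (hT2₁ : Measurable T2₁)
    (hCI : CondIndepFun m hm (fun ω => (T1₀ ω, T2₀ ω)) (fun ω => (T1₁ ω, T2₁ ω)) μ)
    (hios : 0 < μ (iosEv T1₀ T2₀ ∩ iosEv T1₁ T2₁))
    (t : ℝ) (ht0 : 0 ≤ t) (ht1 : t ≤ 1)
    (hden : 0 < ∫ ω, (μ⟦{ω' | T1₀ ω' ≤ t} | m⟧) ω * (μ⟦iosEv T1₁ T2₁ | m⟧) ω ∂μ) :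
    condProbR μ {ω | T1₁ ω ≤ t} (iosEv T1₀ T2₀ ∩ iosEv T1₁ T2₁)
        / condProbR μ {ω | T1₀ ω ≤ t} (iosEv T1₀ T2₀ ∩ iosEv T1₁ T2₁)
      = (∫ ω, (μ⟦{ω' | T1₁ ω' ≤ t} | m⟧) ω * (μ⟦iosEv T1₀ T2₀ | m⟧) ω ∂μ)
        / ∫ ω, (μ⟦{ω' | T1₀ ω' ≤ t} | m⟧) ω * (μ⟦iosEv T1₁ T2₁ | m⟧) ω ∂μ := by
  have hT1₀' : Measurable[mΩ] T1₀ := hT1₀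
  have hT2₀' : Measurable[mΩ] T2₀ := hT2₀
  have hT1₁' : Measurable[mΩ] T1₁ := hT1₁
  have hT2₁' : Measurable[mΩ] T2₁ := hT2₁
  set f : Ω → ℝ × ℝ := fun ω => (T1₀ ω, T2₀ ω) with hf_def
  set g : Ω → ℝ × ℝ := fun ω => (T1₁ ω, T2₁ ω) with hg_def
  have hf : Measurable[mΩ] f := hT1₀'.prodMk hT2₀'
  have hg : Measurable[mΩ] g := hT1₁'.prodMk hT2₁'
  -- sets in ℝ × ℝ
  have hAset : MeasurableSet {p : ℝ × ℝ | p.1 ≤ t} :=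
    measurableSet_le measurable_fst measurable_const
  have hIset : MeasurableSet ({p : ℝ × ℝ | p.1 ≤ 1} ∪ {p : ℝ × ℝ | (1:ℝ) < p.2}) :=
    (measurableSet_le measurable_fst measurable_const).union
      (measurableSet_lt measurable_const measurable_snd)
  -- preimage identifications
  have hA0 : {ω | T1₀ ω ≤ t} = f ⁻¹' {p : ℝ × ℝ | p.1 ≤ t} := rfl
  have hA1 : {ω | T1₁ ω ≤ t} = g ⁻¹' {p : ℝ × ℝ | p.1 ≤ t} := rfl
  have hI0 : iosEv T1₀ T2₀ = f ⁻¹' ({p : ℝ × ℝ | p.1 ≤ 1} ∪ {p : ℝ × ℝ | (1:ℝ) < p.2}) := by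
    ext ω; simp [iosEv, f]
  have hI1 : iosEv T1₁ T2₁ = g ⁻¹' ({p : ℝ × ℝ | p.1 ≤ 1} ∪ {p : ℝ × ℝ | (1:ℝ) < p.2}) := by
    ext ω; simp [iosEv, g]
  have hCI' := (condIndepFun_iff_condExp_inter_preimage_eq_mul (hm' := hm) (f := f) (g := g) hf hg).mp hCI
  -- measurability in Ω
  have hmA0 : MeasurableSet[mΩ] {ω | T1₀ ω ≤ t} := measurableSet_le hT1₀' measurable_const
  have hmA1 : MeasurableSet[mΩ] {ω | T1₁ ω ≤ t} := measurableSet_le hT1₁' measurable_const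
  have hmI0 : MeasurableSet[mΩ] (iosEv T1₀ T2₀) :=
    (measurableSet_le hT1₀' measurable_const).union (measurableSet_lt measurable_const hT2₀')
  have hmI1 : MeasurableSet[mΩ] (iosEv T1₁ T2₁) :=
    (measurableSet_le hT1₁' measurable_const).union (measurableSet_lt measurable_const hT2₁')
  -- subset facts: {T1 ≤ t} ⊆ ios since t ≤ 1
  have hsub0 : {ω | T1₀ ω ≤ t} ⊆ iosEv T1₀ T2₀ := fun ω hω => Or.inl (le_trans hω ht1)
  have hsub1 : {ω | T1₁ ω ≤ t} ⊆ iosEv T1₁ T2₁ := fun ω hω => Or.inl (le_trans hω ht1)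
  -- numerator measure identity
  have hnum : (μ ({ω | T1₁ ω ≤ t} ∩ (iosEv T1₀ T2₀ ∩ iosEv T1₁ T2₁))).toReal
      = ∫ ω, (μ⟦{ω' | T1₁ ω' ≤ t} | m⟧) ω * (μ⟦iosEv T1₀ T2₀ | m⟧) ω ∂μ := by
    have hset : {ω | T1₁ ω ≤ t} ∩ (iosEv T1₀ T2₀ ∩ iosEv T1₁ T2₁)
        = iosEv T1₀ T2₀ ∩ {ω | T1₁ ω ≤ t} := by
      ext ω
      constructor
      · rintro ⟨h1, h2, _⟩; exact ⟨h2, h1⟩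
      · rintro ⟨h1, h2⟩; exact ⟨h2, h1, hsub1 h2⟩
    rw [hset]
    have := measure_inter_eq_integral_mul m μ hm hmI0 hmA1
      (by rw [hI0, hA1]; exact hCI' _ _ hIset hAset)
    rw [this]
    exact integral_congr_ae (Filter.Eventually.of_forall fun ω => mul_comm _ _)
  -- denominator measure identity
  have hdenom : (μ ({ω | T1₀ ω ≤ t} ∩ (iosEv T1₀ T2₀ ∩ iosEv T1₁ T2₁))).toReal
      = ∫ ω, (μ⟦{ω' | T1₀ ω' ≤ t} | m⟧) ω * (μ⟦iosEv T1₁ T2₁ | m⟧) ω ∂μ := by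
    have hset : {ω | T1₀ ω ≤ t} ∩ (iosEv T1₀ T2₀ ∩ iosEv T1₁ T2₁)
        = {ω | T1₀ ω ≤ t} ∩ iosEv T1₁ T2₁ := by
      ext ω
      constructor
      · rintro ⟨h1, _, h3⟩; exact ⟨h1, h3⟩
      · rintro ⟨h1, h2⟩; exact ⟨h1, hsub0 h1, h2⟩
    rw [hset]
    exact measure_inter_eq_integral_mul m μ hm hmA0 hmI1
      (by rw [hA0, hI1]; exact hCI' _ _ hAset hIset)
  -- arithmetic
  have hiosR : ((μ (iosEv T1₀ T2₀ ∩ iosEv T1₁ T2₁)).toReal : ℝ) ≠ 0 := by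
    refine ne_of_gt (ENNReal.toReal_pos (ne_of_gt hios) (measure_ne_top μ _))
  unfold condProbR
  rw [div_div_div_comm, div_self hiosR, div_one, hnum, hdenom]
end
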